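/- Suppose f : Δ = [a,b] × [c,d] → ℝ (a < b, c < d) is a co-ordinated P-function on Δ, with f_x ∈ L₁[c,d] and f_y ∈ L₁[a,b]. Then f((a+b)/2, (c+d)/2) ≤ (1/(b-a)) ∫_a^b f(x, (c+d)/2) dx + (1/(d-c)) ∫_c^d f((a+b)/2, y) dy ≤ (4/((b-a)(d-c))) ∫_a^b ∫_c^d f(x,y) dy dx ≤ (2/(b-a))[∫_a^b f(x,c) dx + ∫_a^b f(x,d) dx] + (2/(d-c))[∫_c^d f(a,y) dy + ∫_c^d f(b,y) dy]. -/

import Mathlib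

/-!
The P-inequality at `l = 1/2` gives `g ((a + b) / 2) ≤ g x + g (a + b - x)`, and integrating over
`[a, b]` (the reflection `x ↦ a + b - x` preserves the integral) gives the one-dimensional bound
`g ((a + b) / 2) ≤ 2 / (b - a) * ∫ g`. At `l = (b - x) / (b - a)` it gives `g x ≤ g a + g b`, hence
`∫ g ≤ (b - a) * (g a + g b)`. Applying both bounds to the partial mappings and integrating once
more in the other variable yields the three inequalities; only iterated integrals occur, so no
Fubini theorem is needed.
-/

open MeasureTheory intervalIntegral Set

/-- Nonnegativity is not required: it follows by taking `u = v`. -/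
def IsPFunctionOn (g : ℝ → ℝ) (s : Set ℝ) : Prop :=
  ∀ u ∈ s, ∀ v ∈ s, ∀ l ∈ Icc (0 : ℝ) 1, g (l * u + (1 - l) * v) ≤ g u + g v

lemma add_sub_mem_Icc {a b x : ℝ} (hx : x ∈ Icc a b) : a + b - x ∈ Icc a b :=
  ⟨by linarith [hx.2], by linarith [hx.1]⟩

namespace IsPFunctionOn

variable {g : ℝ → ℝ} {a b x : ℝ}

lemma midpoint_le_add_reflect (hg : IsPFunctionOn g (Icc a b)) (hx : x ∈ Icc a b) :
    g ((a + b) / 2) ≤ g x + g (a + b - x) := by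
  have := hg x hx (a + b - x) (add_sub_mem_Icc hx) (1 / 2) (by norm_num)
  rwa [show 1 / 2 * x + (1 - 1 / 2) * (a + b - x) = (a + b) / 2 by ring] at this

lemma le_add_endpoints (hg : IsPFunctionOn g (Icc a b)) (hx : x ∈ Icc a b) :
    g x ≤ g a + g b := by
  have hab : a ≤ b := hx.1.trans hx.2
  rcases hab.eq_or_lt with rfl | hab
  · obtain rfl : x = a := le_antisymm hx.2 hx.1
    simpa using hg x hx x hx 1 (by norm_num)
  have hba : 0 < b - a := by linarith
  have hl : (b - x) / (b - a) ∈ Icc (0 : ℝ) 1 :=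
    ⟨div_nonneg (by linarith [hx.2]) hba.le, (div_le_one hba).2 (by linarith [hx.1])⟩
  have := hg a (left_mem_Icc.2 hab.le) b (right_mem_Icc.2 hab.le) _ hl
  rwa [show (b - x) / (b - a) * a + (1 - (b - x) / (b - a)) * b = x by field_simp; ring] at this

end IsPFunctionOn

section Integrals

variable {g : ℝ → ℝ} {a b : ℝ}

lemma le_two_div_mul_integral_of_le_add_reflect (hab : a < b) {K : ℝ}
    (hg : IntervalIntegrable g volume a b) (h : ∀ x ∈ Icc a b, K ≤ g x + g (a + b - x)) :
    K ≤ 2 / (b - a) * ∫ x in a..b, g x := by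
  have hrefl : IntervalIntegrable (fun x => g (a + b - x)) volume a b := by
    simpa using (hg.comp_sub_left (a + b)).symm
  have hmono := integral_mono_on hab.le intervalIntegrable_const (hg.add hrefl) h
  have hreflInt : ∫ x in a..b, g (a + b - x) = ∫ x in a..b, g x := by
    simp [integral_comp_sub_left g (a + b)]
  rw [integral_add hg hrefl, hreflInt, intervalIntegral.integral_const, smul_eq_mul] at hmono
  rw [div_mul_eq_mul_div, le_div_iff₀ (by linarith)]
  linarith

lemma integral_le_mul_of_le (hab : a ≤ b) {C : ℝ} (hg : IntervalIntegrable g volume a b)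
    (h : ∀ x ∈ Icc a b, g x ≤ C) : ∫ x in a..b, g x ≤ (b - a) * C := by
  simpa using integral_mono_on hab hg intervalIntegrable_const h

lemma IsPFunctionOn.midpoint_le_two_div_mul_integral (hab : a < b)
    (hg : IsPFunctionOn g (Icc a b)) (hgi : IntervalIntegrable g volume a b) :
    g ((a + b) / 2) ≤ 2 / (b - a) * ∫ x in a..b, g x :=
  le_two_div_mul_integral_of_le_add_reflect hab hgi fun _ hx => hg.midpoint_le_add_reflect hx

lemma IsPFunctionOn.integral_le_mul_add_endpoints (hab : a ≤ b)
    (hg : IsPFunctionOn g (Icc a b)) (hgi : IntervalIntegrable g volume a b) :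
    ∫ x in a..b, g x ≤ (b - a) * (g a + g b) :=
  integral_le_mul_of_le hab hgi fun _ hx => hg.le_add_endpoints hx

end Integrals

section Coordinated

variable {f : ℝ × ℝ → ℝ} {a b c d : ℝ}

lemma midpoint_le_average_midSections (hab : a < b) (hcd : c < d)
    (hfx : IsPFunctionOn (fun v => f ((a + b) / 2, v)) (Icc c d))
    (hfy : IsPFunctionOn (fun u => f (u, (c + d) / 2)) (Icc a b))
    (hix : IntervalIntegrable (fun v => f ((a + b) / 2, v)) volume c d)
    (hiy : IntervalIntegrable (fun u => f (u, (c + d) / 2)) volume a b) :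
    f ((a + b) / 2, (c + d) / 2) ≤
      1 / (b - a) * (∫ x in a..b, f (x, (c + d) / 2)) +
        1 / (d - c) * ∫ y in c..d, f ((a + b) / 2, y) := by
  have hx := hfy.midpoint_le_two_div_mul_integral hab hiy
  have hy := hfx.midpoint_le_two_div_mul_integral hcd hix
  linear_combination (hx + hy) / 2

lemma integral_midSection_snd_le (hab : a ≤ b) (hcd : c < d)
    (hfx : ∀ x ∈ Icc a b, IsPFunctionOn (fun v => f (x, v)) (Icc c d))
    (hix : ∀ x ∈ Icc a b, IntervalIntegrable (fun v => f (x, v)) volume c d)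
    (hiy : IntervalIntegrable (fun u => f (u, (c + d) / 2)) volume a b)
    (hiI : IntervalIntegrable (fun x => ∫ y in c..d, f (x, y)) volume a b) :
    ∫ x in a..b, f (x, (c + d) / 2) ≤ 2 / (d - c) * ∫ x in a..b, ∫ y in c..d, f (x, y) := by
  rw [← intervalIntegral.integral_const_mul]
  exact integral_mono_on hab hiy (hiI.const_mul _) fun x hx =>
    (hfx x hx).midpoint_le_two_div_mul_integral hcd (hix x hx)

lemma integral_midSection_fst_le (hab : a < b) (hcd : c ≤ d)
    (hfy : ∀ y ∈ Icc c d, IsPFunctionOn (fun u => f (u, y)) (Icc a b))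
    (hix : ∀ x ∈ Icc a b, IntervalIntegrable (fun v => f (x, v)) volume c d)
    (hiI : IntervalIntegrable (fun x => ∫ y in c..d, f (x, y)) volume a b) :
    ∫ y in c..d, f ((a + b) / 2, y) ≤ 2 / (b - a) * ∫ x in a..b, ∫ y in c..d, f (x, y) := by
  have hm : (a + b) / 2 ∈ Icc a b := ⟨by linarith, by linarith⟩
  refine le_two_div_mul_integral_of_le_add_reflect hab hiI fun x hx => ?_
  have hix' := hix _ (add_sub_mem_Icc hx)
  rw [← integral_add (hix x hx) hix']
  exact integral_mono_on hcd (hix _ hm) ((hix x hx).add hix') fun y hy =>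
    (hfy y hy).midpoint_le_add_reflect hx

lemma iteratedIntegral_le_endSections_snd (hab : a ≤ b) (hcd : c ≤ d)
    (hfx : ∀ x ∈ Icc a b, IsPFunctionOn (fun v => f (x, v)) (Icc c d))
    (hix : ∀ x ∈ Icc a b, IntervalIntegrable (fun v => f (x, v)) volume c d)
    (hic : IntervalIntegrable (fun u => f (u, c)) volume a b)
    (hid : IntervalIntegrable (fun u => f (u, d)) volume a b)
    (hiI : IntervalIntegrable (fun x => ∫ y in c..d, f (x, y)) volume a b) :
    ∫ x in a..b, ∫ y in c..d, f (x, y) ≤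
      (d - c) * ((∫ x in a..b, f (x, c)) + ∫ x in a..b, f (x, d)) := by
  rw [← integral_add hic hid, ← intervalIntegral.integral_const_mul]
  exact integral_mono_on hab hiI ((hic.add hid).const_mul _) fun x hx =>
    (hfx x hx).integral_le_mul_add_endpoints hcd (hix x hx)

lemma iteratedIntegral_le_endSections_fst (hab : a ≤ b) (hcd : c ≤ d)
    (hfy : ∀ y ∈ Icc c d, IsPFunctionOn (fun u => f (u, y)) (Icc a b))
    (hix : ∀ x ∈ Icc a b, IntervalIntegrable (fun v => f (x, v)) volume c d)
    (hiI : IntervalIntegrable (fun x => ∫ y in c..d, f (x, y)) volume a b) :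
    ∫ x in a..b, ∫ y in c..d, f (x, y) ≤
      (b - a) * ((∫ y in c..d, f (a, y)) + ∫ y in c..d, f (b, y)) := by
  have hia := hix a (left_mem_Icc.2 hab)
  have hib := hix b (right_mem_Icc.2 hab)
  refine integral_le_mul_of_le hab hiI fun x hx => ?_
  rw [← integral_add hia hib]
  exact integral_mono_on hcd (hix x hx) (hia.add hib) fun y hy =>
    (hfy y hy).le_add_endpoints hx

end Coordinated

theorem coordinated_p_function_hadamard_general
    (a b c d : ℝ) (hab : a < b) (hcd : c < d) (f : ℝ × ℝ → ℝ)
    (hfx : ∀ x ∈ Set.Icc a b, ∀ v₁ ∈ Set.Icc c d, ∀ v₂ ∈ Set.Icc c d,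
      ∀ l ∈ Set.Icc (0:ℝ) 1,
      f (x, l * v₁ + (1 - l) * v₂) ≤ f (x, v₁) + f (x, v₂))
    (hfy : ∀ y ∈ Set.Icc c d, ∀ u₁ ∈ Set.Icc a b, ∀ u₂ ∈ Set.Icc a b,
      ∀ l ∈ Set.Icc (0:ℝ) 1,
      f (l * u₁ + (1 - l) * u₂, y) ≤ f (u₁, y) + f (u₂, y))
    (hix : ∀ x ∈ Set.Icc a b, IntervalIntegrable (fun v => f (x, v)) volume c d)
    (hiy : ∀ y ∈ Set.Icc c d, IntervalIntegrable (fun u => f (u, y)) volume a b)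
    (hiI : IntervalIntegrable (fun x => ∫ y in c..d, f (x, y)) volume a b) :
    f ((a + b) / 2, (c + d) / 2) ≤
      (1 / (b - a)) * (∫ x in a..b, f (x, (c + d) / 2)) +
        (1 / (d - c)) * ∫ y in c..d, f ((a + b) / 2, y) ∧
    (1 / (b - a)) * (∫ x in a..b, f (x, (c + d) / 2)) +
        (1 / (d - c)) * (∫ y in c..d, f ((a + b) / 2, y)) ≤
      (4 / ((b - a) * (d - c))) * ∫ x in a..b, ∫ y in c..d, f (x, y) ∧
    (4 / ((b - a) * (d - c))) * (∫ x in a..b, ∫ y in c..d, f (x, y)) ≤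
      (2 / (b - a)) * ((∫ x in a..b, f (x, c)) + ∫ x in a..b, f (x, d)) +
      (2 / (d - c)) * ((∫ y in c..d, f (a, y)) + ∫ y in c..d, f (b, y)) := by
  have hm : (a + b) / 2 ∈ Icc a b := ⟨by linarith, by linarith⟩
  have hn : (c + d) / 2 ∈ Icc c d := ⟨by linarith, by linarith⟩
  have hba : 0 < b - a := sub_pos.2 hab
  have hdc : 0 < d - c := sub_pos.2 hcd
  have hx₁ := integral_midSection_snd_le hab.le hcd hfx hix (hiy _ hn) hiI
  have hy₁ := integral_midSection_fst_le hab hcd.le hfy hix hiI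
  have hx₂ := iteratedIntegral_le_endSections_snd hab.le hcd.le hfx hix
    (hiy c (left_mem_Icc.2 hcd.le)) (hiy d (right_mem_Icc.2 hcd.le)) hiI
  have hy₂ := iteratedIntegral_le_endSections_fst hab.le hcd.le hfy hix hiI
  refine ⟨midpoint_le_average_midSections hab hcd (hfx _ hm) (hfy _ hn) (hix _ hm) (hiy _ hn),
    ?_, ?_⟩
  · field_simp at hx₁ hy₁ ⊢
    linear_combination hx₁ + hy₁
  · field_simp
    linear_combination 2 * (hx₂ + hy₂)

/-- Hadamard-type inequalities for co-ordinated P-functions on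
`Δ = [a,b] × [c,d]`, with the partial mappings `f_x ∈ L₁[c,d]`,
`f_y ∈ L₁[a,b]` (and the double integral assumed to exist). -/
theorem coordinated_p_function_hadamard
    (a b c d : ℝ) (hab : a < b) (hcd : c < d) (f : ℝ × ℝ → ℝ)
    (hf0 : ∀ p ∈ Set.Icc a b ×ˢ Set.Icc c d, 0 ≤ f p)
    (hfx : ∀ x ∈ Set.Icc a b, ∀ v₁ ∈ Set.Icc c d, ∀ v₂ ∈ Set.Icc c d,
      ∀ l ∈ Set.Icc (0:ℝ) 1,
      f (x, l * v₁ + (1 - l) * v₂) ≤ f (x, v₁) + f (x, v₂))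
    (hfy : ∀ y ∈ Set.Icc c d, ∀ u₁ ∈ Set.Icc a b, ∀ u₂ ∈ Set.Icc a b,
      ∀ l ∈ Set.Icc (0:ℝ) 1,
      f (l * u₁ + (1 - l) * u₂, y) ≤ f (u₁, y) + f (u₂, y))
    (hix : ∀ x ∈ Set.Icc a b, IntervalIntegrable (fun v => f (x, v)) volume c d)
    (hiy : ∀ y ∈ Set.Icc c d, IntervalIntegrable (fun u => f (u, y)) volume a b)
    (hiI : IntervalIntegrable (fun x => ∫ y in c..d, f (x, y)) volume a b) :
    f ((a + b) / 2, (c + d) / 2) ≤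
      (1 / (b - a)) * (∫ x in a..b, f (x, (c + d) / 2)) +
        (1 / (d - c)) * ∫ y in c..d, f ((a + b) / 2, y) ∧
    (1 / (b - a)) * (∫ x in a..b, f (x, (c + d) / 2)) +
        (1 / (d - c)) * (∫ y in c..d, f ((a + b) / 2, y)) ≤
      (4 / ((b - a) * (d - c))) * ∫ x in a..b, ∫ y in c..d, f (x, y) ∧
    (4 / ((b - a) * (d - c))) * (∫ x in a..b, ∫ y in c..d, f (x, y)) ≤
      (2 / (b - a)) * ((∫ x in a..b, f (x, c)) + ∫ x in a..b, f (x, d)) +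
      (2 / (d - c)) * ((∫ y in c..d, f (a, y)) + ∫ y in c..d, f (b, y)) :=
  coordinated_p_function_hadamard_general a b c d hab hcd f hfx hfy hix hiy hiI
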